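/- (Limit formula for observable diameter.) Let X and X_n, n = 1, 2, …, be mm-spaces such that X_n converges to X in the box distance as n → ∞. Then for any κ > 0, ObsDiam(X; -κ) = lim_{ε→0+} liminf_{n→∞} ObsDiam(X_n; -(κ+ε)) = lim_{ε→0+} limsup_{n→∞} ObsDiam(X_n; -(κ+ε)). -/

import Mathlib

/-!
If `□(Xₙ, X) < ε`, a box-distance witness lets one pass from a `1`-Lipschitz function on one
space to a `1`-Lipschitz function on the other that agrees with it up to `ε` along the
parameters, off a set of measure `ε`. Comparing partial diameters of the push-forwards gives
`ObsDiam(Xₙ; -(κ+ε)) ≤ ObsDiam(X; -κ) + 2ε` and `ObsDiam(X; -(κ+2ε)) ≤ ObsDiam(Xₙ; -(κ+ε)) + 2ε`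
for all large `n`. Hence both `liminf` and `limsup` are squeezed between
`ObsDiam(X; -(κ+2ε)) - 2ε` and `ObsDiam(X; -κ) + 2ε`, and both bounds tend to `ObsDiam(X; -κ)`
because `κ ↦ ObsDiam(X; -κ)` is right-continuous. The latter reduces to left continuity of
`α ↦ diam(ν; α)` for probability measures `ν` on `ℝ`, a compactness argument.
-/

open MeasureTheory Filter Topology Bornology

noncomputable section

/-- The partial diameter `diam(ν; α)` of a Borel measure `ν` on `ℝ`. -/
def partialDiam (ν : Measure ℝ) (α : ℝ) : ℝ :=
  sInf {r : ℝ | ∃ A : Set ℝ, MeasurableSet A ∧ IsBounded A ∧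
    ENNReal.ofReal α ≤ ν A ∧ r = Metric.diam A}

/-- The observable diameter `ObsDiam(X; -κ)` with respect to an explicit distance `d`. -/
def obsDiam {X : Type*} [MeasurableSpace X] (d : X → X → ℝ)
    (μ : Measure X) (κ : ℝ) : ℝ :=
  sSup {r : ℝ | ∃ f : X → ℝ, Measurable f ∧ (∀ x y, |f x - f y| ≤ d x y) ∧
    r = partialDiam (μ.map f) (1 - κ)}

/-- A parameter of an mm-space: a Borel map `φ : [0,1) → X` pushing the Lebesgue measure
forward to `μ`. -/
def IsParameter {X : Type*} [MeasurableSpace X] (φ : ℝ → X) (μ : Measure X) : Prop :=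
  Measurable φ ∧ Measure.map φ (volume.restrict (Set.Ico (0 : ℝ) 1)) = μ

/-- The box distance `□(X,Y)` between two mm-spaces, given by explicit distance
functions `dX`, `dY`: the infimum of `ε ≥ 0` admitting parameters `φ, ψ` and a Borel set
`I₀ ⊆ [0,1)` of Lebesgue measure `≥ 1 - ε` on which the pulled-back distances
differ by at most `ε`. -/
def boxDist {X Y : Type*} [MeasurableSpace X] [MeasurableSpace Y]
    (dX : X → X → ℝ) (dY : Y → Y → ℝ) (μX : Measure X) (μY : Measure Y) : ℝ :=
  sInf {ε : ℝ | 0 ≤ ε ∧ ∃ φ : ℝ → X, ∃ ψ : ℝ → Y,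
    IsParameter φ μX ∧ IsParameter ψ μY ∧
    ∃ I₀ : Set ℝ, MeasurableSet I₀ ∧ I₀ ⊆ Set.Ico (0 : ℝ) 1 ∧
      ENNReal.ofReal (1 - ε) ≤ volume I₀ ∧
      ∀ s ∈ I₀, ∀ t ∈ I₀, |dX (φ s) (φ t) - dY (ψ s) (ψ t)| ≤ ε}

/-- The distance function of a metric space (helper to supply instances explicitly). -/
def distFun (X : Type*) [MetricSpace X] : X → X → ℝ := fun a b => dist a b

open Set Metric

lemma exists_lt_measure_closedBall {Y : Type*} [PseudoMetricSpace Y] [MeasurableSpace Y]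
    (μ : Measure Y) (y : Y) {r : ENNReal} (hr : r < μ univ) :
    ∃ R : ℝ, r < μ (closedBall y R) := by
  have hmono : Monotone fun n : ℕ => closedBall y n := fun _ _ h =>
    closedBall_subset_closedBall (Nat.cast_le.2 h)
  have h := tendsto_measure_iUnion_atTop (μ := μ) hmono
  rw [iUnion_closedBall_nat] at h
  obtain ⟨n, hn⟩ := (h.eventually_const_lt hr).exists
  exact ⟨n, hn⟩

section PartialDiam

variable {ν ν' : Measure ℝ} {α c : ℝ}

lemma partialDiam_nonneg (ν : Measure ℝ) (α : ℝ) : 0 ≤ partialDiam ν α :=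
  Real.sInf_nonneg fun _ ⟨_, _, _, _, h⟩ => h ▸ diam_nonneg

lemma partialDiam_le_diam {A : Set ℝ} (hA : MeasurableSet A) (hAb : IsBounded A)
    (hνA : ENNReal.ofReal α ≤ ν A) : partialDiam ν α ≤ diam A :=
  csInf_le ⟨0, fun _ ⟨_, _, _, _, h⟩ => h ▸ diam_nonneg⟩ ⟨A, hA, hAb, hνA, rfl⟩

lemma partialDiam_of_nonpos (hα : α ≤ 0) : partialDiam ν α = 0 := by
  have h := partialDiam_le_diam (ν := ν) (α := α) MeasurableSet.empty isBounded_empty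
    (by simp [hα])
  exact le_antisymm (by simpa using h) (partialDiam_nonneg ν α)

lemma partialDiam_le_of_le_measure_Icc (hc : 0 ≤ c) {a : ℝ}
    (hνa : ENNReal.ofReal α ≤ ν (Icc a (a + c))) : partialDiam ν α ≤ c := by
  simpa [Real.diam_Icc (le_add_of_nonneg_right hc)] using
    partialDiam_le_diam measurableSet_Icc (isBounded_Icc _ _) hνa

variable [IsProbabilityMeasure ν]

lemma exists_measure_Icc_gt {r : ENNReal} (hr : r < 1) : ∃ M : ℝ, r < ν (Icc (-M) M) := by
  obtain ⟨M, hM⟩ := exists_lt_measure_closedBall ν 0 (hr.trans_eq measure_univ.symm)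
  exact ⟨M, by simpa [Real.closedBall_eq_Icc] using hM⟩

lemma exists_lt_of_partialDiam_lt (hα : α < 1) (h : partialDiam ν α < c) :
    ∃ A : Set ℝ, MeasurableSet A ∧ IsBounded A ∧ ENNReal.ofReal α ≤ ν A ∧ diam A < c := by
  obtain ⟨M, hM⟩ := exists_measure_Icc_gt (ν := ν) (ENNReal.ofReal_lt_one.2 hα)
  unfold partialDiam at h
  obtain ⟨_, ⟨A, hA, hAb, hνA, rfl⟩, hAc⟩ := exists_lt_of_csInf_lt
    (by exact ⟨_, Icc (-M) M, measurableSet_Icc, isBounded_Icc _ _, hM.le, rfl⟩) h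
  exact ⟨A, hA, hAb, hνA, hAc⟩

lemma le_partialDiam (hα : α < 1)
    (h : ∀ A, MeasurableSet A → IsBounded A → ENNReal.ofReal α ≤ ν A → c ≤ diam A) :
    c ≤ partialDiam ν α := by
  by_contra! hlt
  obtain ⟨A, hA, hAb, hνA, hAc⟩ := exists_lt_of_partialDiam_lt hα hlt
  exact (h A hA hAb hνA).not_gt hAc

lemma partialDiam_mono {α' : ℝ} (h : α ≤ α') (hα' : α' < 1) :
    partialDiam ν α ≤ partialDiam ν α' :=
  le_partialDiam hα' fun _ hA hAb hνA =>
    partialDiam_le_diam hA hAb ((ENNReal.ofReal_le_ofReal h).trans hνA)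

lemma exists_measure_Icc_ge_of_partialDiam_lt (hα : α < 1)
    (h : partialDiam ν α < c) : ∃ a, ENNReal.ofReal α ≤ ν (Icc a (a + c)) := by
  obtain ⟨A, -, hAb, hνA, hAc⟩ := exists_lt_of_partialDiam_lt hα h
  refine ⟨sInf A, hνA.trans (measure_mono fun x hx => ?_)⟩
  have hsup : sSup A = sInf A + diam A := by rw [Real.diam_eq hAb]; ring
  have hx' := hAb.subset_Icc_sInf_sSup hx
  exact ⟨hx'.1, by linarith [hx'.2]⟩

/-- Intervals of length `c` carrying almost `α` of the mass have left ends in a compact set, so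
they accumulate at an interval carrying all of it. -/
lemma exists_measure_Icc_ge_of_forall_lt (hα : 0 < α)
    (h : ∀ α' ∈ Ioo 0 α, ∃ a, ENNReal.ofReal α' ≤ ν (Icc a (a + c))) :
    ∃ b, ENNReal.ofReal α ≤ ν (Icc b (b + c)) := by
  obtain ⟨u, -, hu, hu_lim⟩ := exists_seq_strictMono_tendsto' (half_lt_self hα)
  choose a ha using fun n => h (u n) ⟨(half_pos hα).trans (hu n).1, (hu n).2⟩
  obtain ⟨M, hM⟩ := exists_measure_Icc_gt (ν := ν)
    (ENNReal.ofReal_lt_one.2 (by linarith : 1 - α / 2 < 1))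
  have ha_mem : ∀ n, a n ∈ Icc (-M - c) M := by
    intro n
    by_contra hn
    have hdisj : Disjoint (Icc (a n) (a n + c)) (Icc (-M) M) :=
      disjoint_left.2 fun x hx hx' => hn ⟨by linarith [hx.2, hx'.1], by linarith [hx.1, hx'.2]⟩
    have h1 : (1 : ENNReal) < ν (Icc (a n) (a n + c) ∪ Icc (-M) M) := by
      rw [measure_union hdisj measurableSet_Icc]
      calc (1 : ENNReal) ≤ ENNReal.ofReal (u n) + ENNReal.ofReal (1 - α / 2) := by
            rw [← ENNReal.ofReal_one]
            exact (ENNReal.ofReal_le_ofReal (by linarith [(hu n).1])).trans ENNReal.ofReal_add_le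
        _ < _ := ENNReal.add_lt_add_of_le_of_lt ENNReal.ofReal_ne_top (ha n) hM
    exact h1.not_ge prob_le_one
  obtain ⟨b, -, σ, hσ, hab⟩ := tendsto_subseq_of_bounded (isBounded_Icc _ _) ha_mem
  have hthick : ∀ δ > 0, ENNReal.ofReal α ≤ ν (cthickening δ (Icc b (b + c))) := by
    intro δ hδ
    refine le_of_tendsto ((ENNReal.tendsto_ofReal hu_lim).comp hσ.tendsto_atTop) ?_
    filter_upwards [Metric.tendsto_nhds.1 hab δ hδ] with n hn
    refine (ha (σ n)).trans (measure_mono fun x hx => ?_)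
    refine mem_cthickening_of_dist_le x (x - (a (σ n) - b)) δ _ ⟨?_, ?_⟩ ?_
    · linarith [hx.1]
    · linarith [hx.2]
    · rw [Real.dist_eq, sub_sub_cancel]
      exact (Real.dist_eq _ _ ▸ hn).le
  refine ⟨b, ge_of_tendsto ((tendsto_measure_cthickening_of_isClosed
    ⟨1, one_pos, measure_ne_top ν _⟩ isClosed_Icc).mono_left (nhdsWithin_le_nhds (s := Ioi 0))) ?_⟩
  filter_upwards [self_mem_nhdsWithin] with δ hδ using hthick δ hδ

lemma partialDiam_le_of_forall_lt (hα₀ : 0 < α) (hα : α < 1)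
    (h : ∀ α' ∈ Ioo 0 α, partialDiam ν α' ≤ c) : partialDiam ν α ≤ c := by
  refine le_of_forall_gt_imp_ge_of_dense fun c' hc' => ?_
  obtain ⟨b, hb⟩ := exists_measure_Icc_ge_of_forall_lt hα₀ fun α' hα' =>
    exists_measure_Icc_ge_of_partialDiam_lt (hα'.2.trans hα) ((h α' hα').trans_lt hc')
  have hc'0 : 0 ≤ c' := by
    linarith [h (α / 2) ⟨half_pos hα₀, half_lt_self hα₀⟩, partialDiam_nonneg ν (α / 2)]
  exact partialDiam_le_of_le_measure_Icc hc'0 hb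

lemma partialDiam_le_add_of_le_cthickening {δ ε : ℝ} (hα : α < 1) (hδ : 0 ≤ δ) (hε : 0 ≤ ε)
    (h : ∀ A, MeasurableSet A → ν A ≤ ν' (cthickening ε A) + ENNReal.ofReal δ) :
    partialDiam ν' (α - δ) ≤ partialDiam ν α + 2 * ε := by
  rw [← sub_le_iff_le_add]
  refine le_partialDiam hα fun A hA hAb hνA => ?_
  rw [sub_le_iff_le_add]
  refine (partialDiam_le_diam isClosed_cthickening.measurableSet hAb.cthickening ?_).trans
    (diam_cthickening_le A hε)
  rw [ENNReal.ofReal_sub _ hδ]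
  exact tsub_le_iff_right.2 (hνA.trans (h A hA))

end PartialDiam

section Parameter

variable {X : Type*} [MeasurableSpace X] {μ : Measure X} {φ : ℝ → X}

lemma exists_isParameter [StandardBorelSpace X] (μ : Measure X) [IsProbabilityMeasure μ] :
    ∃ φ : ℝ → X, IsParameter φ μ := by
  have := nonempty_of_isProbabilityMeasure μ
  obtain ⟨f, hf, hfμ⟩ := μ.exists_measurable_map_eq
  refine ⟨f ∘ projIcc 0 1 zero_le_one, hf.comp continuous_projIcc.measurable, ?_⟩
  have hIco : volume.restrict (Ico (0 : ℝ) 1) = (volume : Measure unitInterval).map (↑) := by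
    rw [Measure.restrict_congr_set Ico_ae_eq_Icc, unitInterval.measurePreserving_coe.map_eq]
  rw [hIco, ← Measure.map_map hf continuous_projIcc.measurable,
    Measure.map_map continuous_projIcc.measurable measurable_subtype_coe]
  simp only [Function.comp_def, projIcc_val, Measure.map_id', hfμ]

lemma IsParameter.measure_eq (hφ : IsParameter φ μ) {S : Set X} (hS : MeasurableSet S) :
    μ S = volume (φ ⁻¹' S ∩ Ico 0 1) := by
  rw [← hφ.2, Measure.map_apply hφ.1 hS, Measure.restrict_apply (hφ.1 hS)]

lemma IsParameter.measure_le_add {Y : Type*} [MeasurableSpace Y] {ν : Measure Y} {ψ : ℝ → Y}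
    (hφ : IsParameter φ μ) (hψ : IsParameter ψ ν) {I₀ : Set ℝ} {ε : ℝ}
    (hI₀ : MeasurableSet I₀) (hI₀s : I₀ ⊆ Ico 0 1) (hI₀v : ENNReal.ofReal (1 - ε) ≤ volume I₀)
    {S : Set X} {T : Set Y} (hS : MeasurableSet S) (hT : MeasurableSet T)
    (h : ψ ⁻¹' T ∩ I₀ ⊆ φ ⁻¹' S) : ν T ≤ μ S + ENNReal.ofReal ε := by
  have hcompl : volume (Ico (0 : ℝ) 1 \ I₀) ≤ ENNReal.ofReal ε := by
    rw [measure_sdiff hI₀s hI₀.nullMeasurableSet (measure_ne_top_of_subset hI₀s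
      (by simp)), Real.volume_Ico, sub_zero, ENNReal.ofReal_one, tsub_le_iff_right]
    calc (1 : ENNReal) = ENNReal.ofReal (ε + (1 - ε)) := by simp
      _ ≤ ENNReal.ofReal ε + volume I₀ := ENNReal.ofReal_add_le.trans (add_le_add_right hI₀v _)
  rw [hψ.measure_eq hT, hφ.measure_eq hS]
  calc volume (ψ ⁻¹' T ∩ Ico 0 1)
      ≤ volume (ψ ⁻¹' T ∩ I₀ ∪ Ico 0 1 \ I₀) := measure_mono fun s hs => by
        by_cases hsI : s ∈ I₀
        exacts [Or.inl ⟨hs.1, hsI⟩, Or.inr ⟨hs.2, hsI⟩]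
    _ ≤ volume (ψ ⁻¹' T ∩ I₀) + volume (Ico (0 : ℝ) 1 \ I₀) := measure_union_le _ _
    _ ≤ volume (φ ⁻¹' S ∩ Ico 0 1) + ENNReal.ofReal ε :=
        add_le_add (measure_mono (subset_inter h (inter_subset_right.trans hI₀s))) hcompl

end Parameter

/-- The witness is the inf-convolution `z ↦ ⨅ i, a i + dist z (y i)`. -/
lemma exists_lipschitzWith_one_abs_sub_le {ι Y : Type*} [PseudoMetricSpace Y]
    (a : ι → ℝ) (y : ι → Y) {ε : ℝ} (h : ∀ i j, a i - a j ≤ dist (y i) (y j) + ε) :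
    ∃ g : Y → ℝ, LipschitzWith 1 g ∧ ∀ i, |a i - g (y i)| ≤ ε := by
  rcases isEmpty_or_nonempty ι with hι | hι
  · exact ⟨0, LipschitzWith.const' 0, isEmptyElim⟩
  have i₀ : ι := Classical.arbitrary ι
  have hB : ∀ z, BddBelow (range fun i => a i + dist z (y i)) := fun z =>
    ⟨a i₀ - ε - dist z (y i₀), forall_mem_range.2 fun i => by
      linarith [h i₀ i, dist_triangle_left (y i₀) (y i) z]⟩
  refine ⟨fun z => ⨅ i, a i + dist z (y i), LipschitzWith.of_le_add_mul 1 fun z w => ?_,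
    fun i => abs_le.2 ⟨?_, ?_⟩⟩
  · rw [NNReal.coe_one, one_mul, ← sub_le_iff_le_add]
    refine le_ciInf fun j => ?_
    linarith [ciInf_le (hB z) j, dist_triangle z w (y j)]
  · have := ciInf_le (hB (y i)) i
    rw [dist_self, add_zero] at this
    linarith [h i i, dist_self (y i)]
  · linarith [le_ciInf fun j => (by linarith [h i j] : a i - ε ≤ a j + dist (y i) (y j))]

section ObsDiam

variable {X : Type*} [MeasurableSpace X]

lemma obsDiam_nonneg (d : X → X → ℝ) (μ : Measure X) (κ : ℝ) : 0 ≤ obsDiam d μ κ :=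
  Real.sSup_nonneg fun _ ⟨_, _, _, h⟩ => h ▸ partialDiam_nonneg _ _

lemma obsDiam_le {d : X → X → ℝ} {μ : Measure X} {κ C : ℝ} (hC : 0 ≤ C)
    (h : ∀ f : X → ℝ, Measurable f → (∀ x y, |f x - f y| ≤ d x y) →
      partialDiam (μ.map f) (1 - κ) ≤ C) :
    obsDiam d μ κ ≤ C :=
  Real.sSup_le (fun _ ⟨f, hf, hlip, h'⟩ => h' ▸ h f hf hlip) hC

variable {Y : Type*} [PseudoMetricSpace Y] [MeasurableSpace Y]
  {μ : Measure Y} [IsProbabilityMeasure μ] {κ : ℝ}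

lemma bddAbove_obsDiam_set (hκ : 0 < κ) :
    BddAbove {r : ℝ | ∃ f : Y → ℝ, Measurable f ∧ (∀ x y, |f x - f y| ≤ dist x y) ∧
      r = partialDiam (μ.map f) (1 - κ)} := by
  obtain ⟨y₀⟩ := nonempty_of_isProbabilityMeasure μ
  obtain ⟨R, hR⟩ := exists_lt_measure_closedBall μ y₀
    ((ENNReal.ofReal_lt_one.2 (by linarith : 1 - κ < 1)).trans_eq measure_univ.symm)
  refine ⟨2 * R, fun _ ⟨f, hf, hlip, hr⟩ => hr ▸ ?_⟩
  have hball : closedBall y₀ R ⊆ f ⁻¹' Icc (f y₀ - R) (f y₀ - R + 2 * R) := fun x hx => by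
    have := abs_le.1 ((hlip x y₀).trans (mem_closedBall.1 hx))
    constructor <;> linarith [this.1, this.2]
  have hR0 : 0 ≤ R := by
    by_contra! hR0
    simp [closedBall_eq_empty.2 hR0] at hR
  refine partialDiam_le_of_le_measure_Icc (a := f y₀ - R) (by positivity) ?_
  rw [Measure.map_apply hf measurableSet_Icc]
  exact hR.le.trans (measure_mono hball)

lemma partialDiam_le_obsDiam (hκ : 0 < κ) {f : Y → ℝ} (hf : Measurable f)
    (hlip : ∀ x y, |f x - f y| ≤ dist x y) :
    partialDiam (μ.map f) (1 - κ) ≤ obsDiam dist μ κ :=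
  le_csSup (bddAbove_obsDiam_set hκ) ⟨f, hf, hlip, rfl⟩

lemma obsDiam_antitoneOn : AntitoneOn (obsDiam dist μ) (Ioi 0) := fun κ hκ κ' _ hκκ' =>
  obsDiam_le (obsDiam_nonneg _ _ _) fun f hf hlip =>
    have := Measure.isProbabilityMeasure_map (μ := μ) hf.aemeasurable
    (partialDiam_mono (by linarith) (by linarith [show (0 : ℝ) < κ from hκ])).trans
      (partialDiam_le_obsDiam hκ hf hlip)

lemma tendsto_obsDiam_nhdsGT (hκ : 0 < κ) :
    Tendsto (obsDiam dist μ) (𝓝[>] κ) (𝓝 (obsDiam dist μ κ)) := by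
  refine tendsto_order.2 ⟨fun a ha => ?_, fun b hb => ?_⟩
  · rcases lt_or_ge a 0 with ha0 | ha0
    · exact Eventually.of_forall fun t => ha0.trans_le (obsDiam_nonneg _ _ _)
    obtain ⟨f, hf, hlip, hfa⟩ : ∃ f : Y → ℝ, Measurable f ∧ (∀ x y, |f x - f y| ≤ dist x y) ∧
        a < partialDiam (μ.map f) (1 - κ) := by
      by_contra! h
      exact ha.not_ge (obsDiam_le ha0 fun f hf hlip => h f hf hlip)
    have := Measure.isProbabilityMeasure_map (μ := μ) hf.aemeasurable
    have hκ1 : 0 < 1 - κ := by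
      by_contra! h
      rw [partialDiam_of_nonpos h] at hfa
      exact hfa.not_ge ha0
    obtain ⟨α', hα', hα'a⟩ : ∃ α' ∈ Ioo 0 (1 - κ), a < partialDiam (μ.map f) α' := by
      by_contra! h
      exact hfa.not_ge (partialDiam_le_of_forall_lt hκ1 (by linarith) h)
    filter_upwards [Ioo_mem_nhdsGT (by linarith [hα'.2] : κ < 1 - α')] with t ht
    calc a < partialDiam (μ.map f) α' := hα'a
      _ ≤ partialDiam (μ.map f) (1 - t) :=
          partialDiam_mono (by linarith [ht.2]) (by linarith [ht.1])
      _ ≤ obsDiam dist μ t := partialDiam_le_obsDiam (hκ.trans ht.1) hf hlip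
  · filter_upwards [self_mem_nhdsWithin] with t ht
    exact (obsDiam_antitoneOn hκ (mem_Ioi.2 (hκ.trans ht)) (le_of_lt ht)).trans_lt hb

end ObsDiam

section BoxDist

variable {X Y : Type*} [MeasurableSpace X] [MeasurableSpace Y]

lemma boxDist_nonneg (dX : X → X → ℝ) (dY : Y → Y → ℝ) (μX : Measure X) (μY : Measure Y) :
    0 ≤ boxDist dX dY μX μY :=
  Real.sInf_nonneg fun _ h => h.1

lemma boxDist_comm (dX : X → X → ℝ) (dY : Y → Y → ℝ) (μX : Measure X) (μY : Measure Y) :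
    boxDist dX dY μX μY = boxDist dY dX μY μX := by
  unfold boxDist
  congr 1
  ext ε
  constructor <;>
  · rintro ⟨hε, φ, ψ, hφ, hψ, I₀, hI₀, hI₀s, hI₀v, hbox⟩
    exact ⟨hε, ψ, φ, hψ, hφ, I₀, hI₀, hI₀s, hI₀v, fun s hs t ht => abs_sub_comm (α := ℝ) _ _ ▸
      hbox s hs t ht⟩

lemma exists_isParameter_of_boxDist_lt {dX : X → X → ℝ} {dY : Y → Y → ℝ} {μX : Measure X}
    {μY : Measure Y} (hμX : ∃ φ : ℝ → X, IsParameter φ μX)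
    (hμY : ∃ ψ : ℝ → Y, IsParameter ψ μY) {ε : ℝ} (h : boxDist dX dY μX μY < ε) :
    ∃ φ : ℝ → X, ∃ ψ : ℝ → Y, IsParameter φ μX ∧ IsParameter ψ μY ∧
      ∃ I₀ : Set ℝ, MeasurableSet I₀ ∧ I₀ ⊆ Ico (0 : ℝ) 1 ∧
        ENNReal.ofReal (1 - ε) ≤ volume I₀ ∧
        ∀ s ∈ I₀, ∀ t ∈ I₀, |dX (φ s) (φ t) - dY (ψ s) (ψ t)| ≤ ε := by
  obtain ⟨φ₀, hφ₀⟩ := hμX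
  obtain ⟨ψ₀, hψ₀⟩ := hμY
  unfold boxDist at h
  obtain ⟨ε', ⟨-, φ, ψ, hφ, hψ, I₀, hI₀, hI₀s, hI₀v, hbox⟩, hε'⟩ := exists_lt_of_csInf_lt
    (by exact ⟨1, zero_le_one, φ₀, ψ₀, hφ₀, hψ₀, ∅, .empty, empty_subset _, by simp, by simp⟩) h
  exact ⟨φ, ψ, hφ, hψ, I₀, hI₀, hI₀s,
    (ENNReal.ofReal_le_ofReal (by linarith : 1 - ε ≤ 1 - ε')).trans hI₀v,
    fun s hs t ht => (hbox s hs t ht).trans hε'.le⟩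

lemma obsDiam_add_le_of_boxDist_lt {dX : X → X → ℝ} [PseudoMetricSpace Y]
    [OpensMeasurableSpace Y] {μX : Measure X} {μY : Measure Y} [IsProbabilityMeasure μY]
    (hμX : ∃ φ : ℝ → X, IsParameter φ μX) (hμY : ∃ ψ : ℝ → Y, IsParameter ψ μY)
    {κ ε : ℝ} (hκ : 0 < κ) (h : boxDist dX dist μX μY < ε) :
    obsDiam dX μX (κ + ε) ≤ obsDiam dist μY κ + 2 * ε := by
  have hε : 0 ≤ ε := (boxDist_nonneg _ _ _ _).trans h.le
  obtain ⟨φ, ψ, hφ, hψ, I₀, hI₀, hI₀s, hI₀v, hbox⟩ :=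
    exists_isParameter_of_boxDist_lt hμX hμY h
  refine obsDiam_le (add_nonneg (obsDiam_nonneg _ _ _) (by positivity)) fun f hf hlip => ?_
  obtain ⟨g, hg, hfg⟩ := exists_lipschitzWith_one_abs_sub_le (fun s : I₀ => f (φ s))
    (fun s : I₀ => ψ s) (ε := ε) fun s t =>
      ((le_abs_self _).trans (hlip _ _)).trans (by linarith [(abs_le.1 (hbox s s.2 t t.2)).2])
  have hgm : Measurable g := hg.continuous.measurable
  have hglip : ∀ x y, |g x - g y| ≤ dist x y := fun x y => by
    simpa [Real.dist_eq] using hg.dist_le_mul x y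
  have := Measure.isProbabilityMeasure_map (μ := μY) hgm.aemeasurable
  calc partialDiam (μX.map f) (1 - (κ + ε)) = partialDiam (μX.map f) (1 - κ - ε) := by ring_nf
    _ ≤ partialDiam (μY.map g) (1 - κ) + 2 * ε :=
        partialDiam_le_add_of_le_cthickening (by linarith) hε hε fun A hA => by
          rw [Measure.map_apply hgm hA, Measure.map_apply hf isClosed_cthickening.measurableSet]
          refine hφ.measure_le_add hψ hI₀ hI₀s hI₀v
            (hf isClosed_cthickening.measurableSet) (hgm hA) fun s hs => ?_
          exact mem_cthickening_of_dist_le _ _ _ _ hs.1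
            ((Real.dist_eq _ _).trans_le (hfg ⟨s, hs.2⟩))
    _ ≤ obsDiam dist μY κ + 2 * ε := by gcongr; exact partialDiam_le_obsDiam hκ hgm hglip

end BoxDist

lemma obsDiam_mem_Icc_of_boxDist_lt {X Y : Type*} [MetricSpace X] [MeasurableSpace X]
    [BorelSpace X] [StandardBorelSpace X] [MetricSpace Y] [MeasurableSpace Y] [BorelSpace Y]
    [StandardBorelSpace Y] {μX : Measure X} {μY : Measure Y} [IsProbabilityMeasure μX]
    [IsProbabilityMeasure μY] {κ ε : ℝ} (hκ : 0 < κ) (h : boxDist dist dist μX μY < ε) :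
    obsDiam dist μX (κ + ε) ∈
      Icc (obsDiam dist μY (κ + 2 * ε) - 2 * ε) (obsDiam dist μY κ + 2 * ε) := by
  have hε : 0 ≤ ε := (boxDist_nonneg _ _ _ _).trans h.le
  have hYX := obsDiam_add_le_of_boxDist_lt (exists_isParameter μY) (exists_isParameter μX)
    (by linarith : 0 < κ + ε) (boxDist_comm (dist : X → X → ℝ) dist μX μY ▸ h)
  rw [add_assoc, ← two_mul] at hYX
  exact ⟨by linarith, obsDiam_add_le_of_boxDist_lt (exists_isParameter μX)
    (exists_isParameter μY) hκ h⟩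

lemma tendsto_liminf_limsup_of_eventually_mem_Icc {ι β : Type*} {F : Filter ι} {G : Filter β}
    [G.NeBot] {u : ι → β → ℝ} {lower upper : ι → ℝ} {l : ℝ}
    (hlower : Tendsto lower F (𝓝 l)) (hupper : Tendsto upper F (𝓝 l))
    (h : ∀ᶠ i in F, ∀ᶠ n in G, u i n ∈ Icc (lower i) (upper i)) :
    Tendsto (fun i => liminf (u i) G) F (𝓝 l) ∧ Tendsto (fun i => limsup (u i) G) F (𝓝 l) := by
  have hbounds : ∀ᶠ i in F, lower i ≤ liminf (u i) G ∧ limsup (u i) G ≤ upper i ∧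
      liminf (u i) G ≤ limsup (u i) G := h.mono fun i hi => by
    have hle : ∀ᶠ n in G, u i n ≤ upper i := hi.mono fun _ hn => hn.2
    have hge : ∀ᶠ n in G, lower i ≤ u i n := hi.mono fun _ hn => hn.1
    exact ⟨le_liminf_of_le (isBoundedUnder_of_eventually_le hle).isCoboundedUnder_ge hge,
      limsup_le_of_le (isBoundedUnder_of_eventually_ge hge).isCoboundedUnder_le hle,
      liminf_le_limsup (isBoundedUnder_of_eventually_le hle)
        (isBoundedUnder_of_eventually_ge hge)⟩
  exact ⟨tendsto_of_tendsto_of_tendsto_of_le_of_le' hlower hupper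
      (hbounds.mono fun _ hi => hi.1) (hbounds.mono fun _ hi => hi.2.2.trans hi.2.1),
    tendsto_of_tendsto_of_tendsto_of_le_of_le' hlower hupper
      (hbounds.mono fun _ hi => hi.1.trans hi.2.2) (hbounds.mono fun _ hi => hi.2.1)⟩

/-- **Theorem 2.11 (limit formula for the observable diameter).**
If mm-spaces `Xₙ` box-converge to `X`, then for every `κ > 0`,
`ObsDiam(X;-κ) = lim_{ε→0+} liminf_n ObsDiam(Xₙ;-(κ+ε))
             = lim_{ε→0+} limsup_n ObsDiam(Xₙ;-(κ+ε))`. -/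
theorem obsDiam_limit_formula
    {X : Type*} [MetricSpace X] [CompleteSpace X] [TopologicalSpace.SeparableSpace X]
    [MeasurableSpace X] [BorelSpace X]
    (μ : Measure X) [IsProbabilityMeasure μ]
    (Xn : ℕ → Type*) (iMet : ∀ n, MetricSpace (Xn n))
    (iMeas : ∀ n, MeasurableSpace (Xn n))
    (iComp : ∀ n, @CompleteSpace (Xn n) (iMet n).toPseudoMetricSpace.toUniformSpace)
    (iSep : ∀ n, @TopologicalSpace.SeparableSpace (Xn n)
      (iMet n).toPseudoMetricSpace.toUniformSpace.toTopologicalSpace)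
    (iBorel : ∀ n, @BorelSpace (Xn n)
      (iMet n).toPseudoMetricSpace.toUniformSpace.toTopologicalSpace (iMeas n))
    (μn : ∀ n, @Measure (Xn n) (iMeas n))
    (iProb : ∀ n, @IsProbabilityMeasure (Xn n) (iMeas n) (μn n))
    (hconv : Tendsto (fun n : ℕ =>
      @boxDist (Xn n) X (iMeas n) _ (@distFun (Xn n) (iMet n)) dist (μn n) μ)
      atTop (𝓝 0))
    (κ : ℝ) (hκ : 0 < κ) :
    Tendsto (fun ε : ℝ => liminf (fun n : ℕ =>
        @obsDiam (Xn n) (iMeas n) (@distFun (Xn n) (iMet n)) (μn n) (κ + ε)) atTop)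
      (𝓝[>] (0 : ℝ)) (𝓝 (obsDiam dist μ κ)) ∧
    Tendsto (fun ε : ℝ => limsup (fun n : ℕ =>
        @obsDiam (Xn n) (iMeas n) (@distFun (Xn n) (iMet n)) (μn n) (κ + ε)) atTop)
      (𝓝[>] (0 : ℝ)) (𝓝 (obsDiam dist μ κ)) := by
  have hshift : Tendsto (fun ε : ℝ => κ + 2 * ε) (𝓝[>] 0) (𝓝[>] κ) := by
    refine tendsto_nhdsWithin_of_tendsto_nhds_of_eventually_within _ ?_ ?_
    · exact (Continuous.tendsto' (by fun_prop) 0 κ (by ring)).mono_left nhdsWithin_le_nhds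
    · filter_upwards [self_mem_nhdsWithin] with ε (hε : 0 < ε)
      exact mem_Ioi.2 (by linarith)
  have htwo : Tendsto (fun ε : ℝ => 2 * ε) (𝓝[>] 0) (𝓝 0) :=
    (Continuous.tendsto' (by fun_prop) 0 0 (by ring)).mono_left nhdsWithin_le_nhds
  refine tendsto_liminf_limsup_of_eventually_mem_Icc
    (by simpa using ((tendsto_obsDiam_nhdsGT hκ).comp hshift).sub htwo)
    (by simpa using tendsto_const_nhds.add htwo) ?_
  filter_upwards [self_mem_nhdsWithin] with ε (hε : 0 < ε)
  filter_upwards [hconv.eventually_lt_const hε] with n hn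
  let := iMet n
  have := iComp n
  have := iSep n
  have := iBorel n
  have := iProb n
  exact obsDiam_mem_Icc_of_boxDist_lt hκ hn
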